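/- arXiv:1709.05724 — 4 statements merged into one kernel-verified Lean document; each statement's English description precedes it below -/
import Mathlib

section
/- For every g ≥ 1, the set of 2g-tuples (f₁,…,f_{2g}) of elements of the affine group Aff(ℂ) satisfying the surface-group relation ∏_{i=1}^{g} [f_{2i−1}, f_{2i}] = id is in bijection with the variety X_{2g} = {(a₁,b₁,…,a_{2g},b_{2g}) ∈ ((ℂ∖{0}) × ℂ)^{2g} : ∑_{i=1}^{2g} (a_i − 1)·b_i = 0}. -/
open scoped commutatorElement

/-- The set of `2g`-tuples `(f₁,…,f_{2g})` of elements of the affine group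
`Aff(ℂ) = (ℂ ≃ᵃ[ℂ] ℂ)` satisfying the surface-group relation
`∏_{i=1}^{g} [f_{2i−1}, f_{2i}] = id` (indices here from `0`). -/
def SurfaceRepAff (g : ℕ) : Type :=
  {f : Fin (2 * g) → (ℂ ≃ᵃ[ℂ] ℂ) //
    ((List.finRange g).map fun i =>
        ⁅f ⟨2 * i.1, by have := i.isLt; omega⟩, f ⟨2 * i.1 + 1, by have := i.isLt; omega⟩⁆).prod
      = 1}

/-- The variety `X_k = {(a₁,b₁,…,a_k,b_k) ∈ ((ℂ∖{0}) × ℂ)^k : ∑ (a_i − 1)·b_i = 0}`. -/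
def Xvar (k : ℕ) : Type :=
  {p : Fin k → ℂ × ℂ // (∀ i, (p i).1 ≠ 0) ∧ ∑ i, ((p i).1 - 1) * (p i).2 = 0}

/-!
An affine automorphism `x ↦ a x + b` of a field is determined by `(a, b) = (f.linear 1, f 0)`,
and the commutator of `(a, b)` and `(c, d)` is the translation by `(a - 1) d - (c - 1) b`.
Translations compose by adding, so the surface relation says
`∑ᵢ ((a_{2i} - 1) b_{2i+1} - (a_{2i+1} - 1) b_{2i}) = 0`, and the change of variables
`(b_{2i}, b_{2i+1}) ↦ (b_{2i+1}, -b_{2i})` turns this into the equation of `X_{2g}`.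
-/

def commutatorShift {K : Type*} [Ring K] (p q : K × K) : K := (p.1 - 1) * q.2 - (q.1 - 1) * p.2

namespace AffineEquiv

section Torsor

variable {k V P : Type*} [Ring k] [AddCommGroup V] [Module k V] [AddTorsor V P]

theorem list_prod_map_constVAdd {ι : Type*} (l : List ι) (v : ι → V) :
    (l.map fun i => constVAdd k P (v i)).prod = constVAdd k P (l.map v).sum := by
  simpa [List.map_map, Function.comp_def] using
    (map_list_prod (constVAddHom k P) (l.map (Multiplicative.ofAdd ∘ v))).symm

theorem constVAdd_eq_one_iff [Nonempty P] (v : V) : constVAdd k P v = 1 ↔ v = 0 := by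
  refine ⟨fun h => ?_, fun h => h ▸ constVAdd_zero k P⟩
  obtain ⟨p⟩ := ‹Nonempty P›
  exact (vadd_right_cancel_iff p).mp (congr($h p).trans (zero_vadd V p).symm)

end Torsor

theorem apply_eq_linear_one_mul_add {K : Type*} [CommRing K] (f : K ≃ᵃ[K] K) (x : K) :
    f x = f.linear 1 * x + f 0 := by
  have h := f.map_vadd 0 x
  rw [vadd_eq_add, vadd_eq_add, add_zero] at h
  rw [h, mul_comm, ← smul_eq_mul, ← map_smul, smul_eq_mul, mul_one]

theorem linear_one_ne_zero {K : Type*} [Ring K] [Nontrivial K] (f : K ≃ᵃ[K] K) :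
    f.linear 1 ≠ 0 :=
  f.linear.map_ne_zero_iff.mpr one_ne_zero

section Field

variable {K : Type*} [Field K]

theorem symm_apply_eq_div (f : K ≃ᵃ[K] K) (y : K) : f.symm y = (y - f 0) / f.linear 1 := by
  rw [eq_div_iff f.linear_one_ne_zero, eq_sub_iff_add_eq, mul_comm, ← apply_eq_linear_one_mul_add,
    apply_symm_apply]

def slopeInterceptEquiv : (K ≃ᵃ[K] K) ≃ {p : K × K // p.1 ≠ 0} where
  toFun f := ⟨(f.linear 1, f 0), f.linear_one_ne_zero⟩
  invFun p := (LinearEquiv.smulOfNeZero K K p.1.1 p.2).toAffineEquiv.trans (constVAdd K K p.1.2)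
  left_inv f := by
    ext x
    simp [f.apply_eq_linear_one_mul_add x, add_comm]
  right_inv p := by
    ext
    · exact mul_one _
    · simp

def slopeInterceptPiEquiv (ι : Type*) :
    (ι → K ≃ᵃ[K] K) ≃ {p : ι → K × K // ∀ i, (p i).1 ≠ 0} :=
  (Equiv.piCongrRight fun _ => slopeInterceptEquiv).trans Equiv.subtypePiEquivPi.symm

theorem commutatorElement_eq_constVAdd (f g : K ≃ᵃ[K] K) :
    ⁅f, g⁆ = constVAdd K K (commutatorShift (slopeInterceptEquiv f) (slopeInterceptEquiv g)) := by
  ext x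
  have hf := f.linear_one_ne_zero
  have hg := g.linear_one_ne_zero
  simp only [commutatorElement_def, mul_def, inv_def, trans_apply, symm_apply_eq_div,
    constVAdd_apply, vadd_eq_add, commutatorShift, slopeInterceptEquiv, Equiv.coe_fn_mk]
  rw [apply_eq_linear_one_mul_add f, apply_eq_linear_one_mul_add g]
  field_simp
  ring

theorem list_prod_map_commutatorElement_eq_one_iff {ι : Type*} (l : List ι)
    (f g : ι → K ≃ᵃ[K] K) :
    (l.map fun i => ⁅f i, g i⁆).prod = 1 ↔
      (l.map fun i => commutatorShift (slopeInterceptEquiv (f i) : K × K)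
        (slopeInterceptEquiv (g i))).sum = 0 := by
  simp only [commutatorElement_eq_constVAdd, list_prod_map_constVAdd, constVAdd_eq_one_iff]

end Field

end AffineEquiv

def finPairEquiv (g : ℕ) : Fin g × Fin 2 ≃ Fin (2 * g) where
  toFun x := ⟨2 * x.1 + x.2, by omega⟩
  invFun j := (⟨j / 2, by omega⟩, ⟨j % 2, by omega⟩)
  left_inv x := by ext <;> simp <;> omega
  right_inv j := by ext; simp; omega

def pairUp (g : ℕ) (X : Type*) : (Fin (2 * g) → X) ≃ (Fin g → X × X) :=
  ((finPairEquiv g).arrowCongr (Equiv.refl X)).symm.trans <|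
    (Equiv.curry _ _ _).trans (Equiv.piCongrRight fun _ => piFinTwoEquiv fun _ => X)

theorem pairUp_comp {g : ℕ} {X Y : Type*} (φ : X → Y) (p : Fin (2 * g) → X) (i : Fin g) :
    pairUp g Y (φ ∘ p) i = Prod.map φ φ (pairUp g X p i) := rfl

theorem sum_eq_sum_pairUp {g : ℕ} {X M : Type*} [AddCommMonoid M] (φ : X → M)
    (p : Fin (2 * g) → X) :
    ∑ j, φ (p j) = ∑ i, (φ (pairUp g X p i).1 + φ (pairUp g X p i).2) := by
  rw [← (finPairEquiv g).sum_comp, Fintype.sum_prod_type]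
  simp only [Fin.sum_univ_two]
  rfl

theorem list_prod_commutatorElement_pairUp_eq_one_iff {K : Type*} [Field K] {g : ℕ}
    (f : Fin (2 * g) → K ≃ᵃ[K] K) :
    ((List.finRange g).map fun i => ⁅(pairUp g _ f i).1, (pairUp g _ f i).2⁆).prod = 1 ↔
      ∑ i, commutatorShift (pairUp g _ (AffineEquiv.slopeInterceptPiEquiv _ f).1 i).1
        (pairUp g _ (AffineEquiv.slopeInterceptPiEquiv _ f).1 i).2 = 0 := by
  rw [AffineEquiv.list_prod_map_commutatorElement_eq_one_iff, Fin.sum_univ_def]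
  rfl

section Rotation

variable {K : Type*} [Ring K]

def rotatePair : (K × K) × (K × K) ≃ (K × K) × (K × K) where
  toFun x := ((x.1.1, x.2.2), (x.2.1, -x.1.2))
  invFun y := ((y.1.1, -y.2.2), (y.2.1, y.1.2))
  left_inv x := by simp
  right_inv y := by simp

theorem commutatorShift_eq_rotatePair (x : (K × K) × (K × K)) :
    commutatorShift x.1 x.2 =
      ((rotatePair x).1.1 - 1) * (rotatePair x).1.2 +
        ((rotatePair x).2.1 - 1) * (rotatePair x).2.2 := by
  simp only [commutatorShift, rotatePair, Equiv.coe_fn_mk, mul_neg, sub_eq_add_neg]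

def rotatePairs (g : ℕ) : (Fin (2 * g) → K × K) ≃ (Fin (2 * g) → K × K) :=
  (pairUp g _).trans <| (Equiv.piCongrRight fun _ => rotatePair).trans (pairUp g _).symm

theorem pairUp_rotatePairs {g : ℕ} (p : Fin (2 * g) → K × K) :
    pairUp g _ (rotatePairs g p) = fun i => rotatePair (pairUp g _ p i) :=
  Equiv.apply_symm_apply _ _

theorem rotatePairs_apply_fst {g : ℕ} (p : Fin (2 * g) → K × K) (j : Fin (2 * g)) :
    (rotatePairs g p j).1 = (p j).1 :=
  congrFun ((pairUp g K).injective <| funext fun i => by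
    rw [pairUp_comp, pairUp_comp, pairUp_rotatePairs]
    rfl : Prod.fst ∘ rotatePairs g p = Prod.fst ∘ p) j

theorem sum_rotatePairs {g : ℕ} (p : Fin (2 * g) → K × K) :
    ∑ j, ((rotatePairs g p j).1 - 1) * (rotatePairs g p j).2 =
      ∑ i, commutatorShift (pairUp g _ p i).1 (pairUp g _ p i).2 := by
  rw [sum_eq_sum_pairUp (fun x : K × K => (x.1 - 1) * x.2), pairUp_rotatePairs]
  simp only [commutatorShift_eq_rotatePair]

theorem rotatePairs_mem_iff {g : ℕ} (p : Fin (2 * g) → K × K) :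
    ((∀ j, (p j).1 ≠ 0) ∧ ∑ i, commutatorShift (pairUp g _ p i).1 (pairUp g _ p i).2 = 0) ↔
      (∀ j, (rotatePairs g p j).1 ≠ 0) ∧
        ∑ j, ((rotatePairs g p j).1 - 1) * (rotatePairs g p j).2 = 0 := by
  rw [sum_rotatePairs]
  simp only [rotatePairs_apply_fst]

end Rotation

theorem surfaceRepAff_equiv_Xvar_general (g : ℕ) :
    Nonempty (SurfaceRepAff g ≃ Xvar (2 * g)) :=
  ⟨((Equiv.subtypeEquiv (AffineEquiv.slopeInterceptPiEquiv _)
        list_prod_commutatorElement_pairUp_eq_one_iff).trans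
      (Equiv.subtypeSubtypeEquivSubtypeInter _ _)).trans
    (Equiv.subtypeEquiv (rotatePairs g) rotatePairs_mem_iff)⟩

/-- For `g ≥ 1`, the set of `2g`-tuples of elements of `Aff(ℂ)` satisfying the
surface-group relation is in bijection with the variety `X_{2g}`. -/
theorem surfaceRepAff_equiv_Xvar (g : ℕ) (hg : 1 ≤ g) :
    Nonempty (SurfaceRepAff g ≃ Xvar (2 * g)) :=
  surfaceRepAff_equiv_Xvar_general g
end

section
/- Let 𝒢 be a connected groupoid, a an object of 𝒢, and G a group. Then there is a bijection between the set of functors from 𝒢 to the one-object groupoid SingleObj G and the product (Hom_{Grp}(𝒢_a, G)) × (G^{Obj(𝒢)∖{a}}), i.e., the set of pairs consisting of a group homomorphism from the vertex group 𝒢_a of a to G together with an arbitrary function from the objects of 𝒢 other than a to G. -/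
/-!
Choose morphisms `p b : a ⟶ b` with `p a = 𝟙 a`. Every `f : b ⟶ c` factors as
`(p b)⁻¹ ≫ (p b ≫ f ≫ (p c)⁻¹) ≫ p c` with the middle factor a loop at `a`, so a functor
`F : 𝒢 ⥤ SingleObj G` is determined by its restriction to the vertex group `a ⟶ a` and by the
values `F.map (p b)`, which are forced to be `1` only at `b = a`. Conversely, any homomorphism
on the vertex group and any choice of these values defines a functor through this factorisation.
-/

open CategoryTheory

def Equiv.subtypeFunEqAt {α β : Type*} [DecidableEq α] (a : α) (b : β) :
    {g : α → β // g a = b} ≃ ({x // x ≠ a} → β) where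
  toFun g x := g.1 x
  invFun g := ⟨fun x => if h : x = a then b else g ⟨x, h⟩, by simp⟩
  left_inv g := by
    ext x
    by_cases h : x = a
    · simp [h, g.2]
    · simp [h]
  right_inv g := by
    ext x
    simp [x.2]

namespace CategoryTheory

variable {𝒢 : Type*} [Groupoid 𝒢] {G : Type*} [Group G]

namespace SingleObj

lemma functor_map_id (F : 𝒢 ⥤ SingleObj G) (b : 𝒢) : (F.map (𝟙 b) : G) = 1 := by
  rw [F.map_id, SingleObj.id_as_one]

lemma functor_map_comp (F : 𝒢 ⥤ SingleObj G) {b c d : 𝒢} (f : b ⟶ c) (g : c ⟶ d) :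
    (F.map (f ≫ g) : G) = F.map g * F.map f := by
  rw [F.map_comp, SingleObj.comp_as_mul]

lemma functor_map_inv (F : 𝒢 ⥤ SingleObj G) {b c : 𝒢} (f : b ⟶ c) :
    (F.map (Groupoid.inv f) : G) = (F.map f)⁻¹ := by
  rw [Groupoid.inv_eq_inv, F.map_inv, SingleObj.inv_as_inv]

end SingleObj

/-- Since `SingleObj G` composes in the reverse order, the restriction of `F` to the vertex
group is an anti-homomorphism; inverting turns it into a homomorphism. -/
@[simps]
def Functor.vertexHom (F : 𝒢 ⥤ SingleObj G) (a : 𝒢) : (a ⟶ a) →* G where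
  toFun x := (F.map x)⁻¹
  map_one' := by
    rw [inv_eq_one]
    exact SingleObj.functor_map_id F a
  map_mul' x y := by
    rw [← mul_inv_rev, ← SingleObj.functor_map_comp, Groupoid.vertexGroup_mul]

variable {a : 𝒢}

def loopVia (p : ∀ b, a ⟶ b) {b c : 𝒢} (f : b ⟶ c) : a ⟶ a :=
  p b ≫ f ≫ Groupoid.inv (p c)

lemma loopVia_id (p : ∀ b, a ⟶ b) (b : 𝒢) : loopVia p (𝟙 b) = 1 := by
  rw [loopVia, Category.id_comp, Groupoid.comp_inv, Groupoid.vertexGroup_one]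

lemma loopVia_comp (p : ∀ b, a ⟶ b) {b c d : 𝒢} (f : b ⟶ c) (g : c ⟶ d) :
    loopVia p (f ≫ g) = loopVia p f * loopVia p g := by
  simp [loopVia, Groupoid.vertexGroup_mul]

lemma inv_comp_loopVia_comp (p : ∀ b, a ⟶ b) {b c : 𝒢} (f : b ⟶ c) :
    Groupoid.inv (p b) ≫ loopVia p f ≫ p c = f := by
  simp [loopVia]

lemma loopVia_of_eq_id {p : ∀ b, a ⟶ b} (hp : p a = 𝟙 a) (x : a ⟶ a) : loopVia p x = x := by
  simp [loopVia, hp]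

lemma loopVia_self {p : ∀ b, a ⟶ b} (hp : p a = 𝟙 a) (b : 𝒢) : loopVia p (p b) = 1 := by
  simp [loopVia, hp]

lemma SingleObj.functor_map_eq_loopVia (F : 𝒢 ⥤ SingleObj G) (p : ∀ b, a ⟶ b) {b c : 𝒢}
    (f : b ⟶ c) : (F.map f : G) = F.map (p c) * F.map (loopVia p f) * (F.map (p b))⁻¹ := by
  conv_lhs => rw [← inv_comp_loopVia_comp p f]
  rw [functor_map_comp, functor_map_comp, functor_map_inv, mul_assoc]

/-- `g b` prescribes the value of the functor on `p b`. -/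
def functorOfVertexHom (p : ∀ b, a ⟶ b) (φ : (a ⟶ a) →* G) (g : 𝒢 → G) :
    𝒢 ⥤ SingleObj G where
  obj _ := SingleObj.star G
  map {b c} f := g c * (φ (loopVia p f))⁻¹ * (g b)⁻¹
  map_id b := by
    rw [loopVia_id, map_one, inv_one, mul_one, mul_inv_cancel, SingleObj.id_as_one]
  map_comp f h := by
    rw [SingleObj.comp_as_mul, loopVia_comp, map_mul, mul_inv_rev]
    group

lemma functorOfVertexHom_map (p : ∀ b, a ⟶ b) (φ : (a ⟶ a) →* G) (g : 𝒢 → G) {b c : 𝒢}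
    (f : b ⟶ c) :
    ((functorOfVertexHom p φ g).map f : G) = g c * (φ (loopVia p f))⁻¹ * (g b)⁻¹ :=
  rfl

def functorToSingleObjEquiv (p : ∀ b, a ⟶ b) (hp : p a = 𝟙 a) :
    (𝒢 ⥤ SingleObj G) ≃ ((a ⟶ a) →* G) × {g : 𝒢 → G // g a = 1} where
  toFun F := (F.vertexHom a, ⟨fun b => F.map (p b), by simp only [hp, SingleObj.functor_map_id]⟩)
  invFun x := functorOfVertexHom p x.1 x.2
  left_inv F := Functor.ext (fun _ => rfl) fun b c f => by
    simp only [eqToHom_refl, Category.id_comp, Category.comp_id]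
    rw [functorOfVertexHom_map, SingleObj.functor_map_eq_loopVia F p f, Functor.vertexHom_apply,
      inv_inv]
  right_inv := by
    rintro ⟨φ, g, hg⟩
    ext x
    · show ((functorOfVertexHom p φ g).map x : G)⁻¹ = φ x
      rw [functorOfVertexHom_map, loopVia_of_eq_id hp, hg, inv_one, one_mul, mul_one, inv_inv]
    · show ((functorOfVertexHom p φ g).map (p x) : G) = g x
      rw [functorOfVertexHom_map, loopVia_self hp, map_one, hg, inv_one, mul_one, mul_one]

end CategoryTheory

/-- For a connected groupoid `𝒢`, an object `a`, and a group `G`, the functors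
`𝒢 ⥤ SingleObj G` are in bijection with pairs of a group homomorphism from the
vertex group `𝒢_a = (a ⟶ a)` to `G` together with an arbitrary function from the
objects of `𝒢` other than `a` to `G`. -/
theorem functors_equiv_hom_times_free {𝒢 : Type*} [Groupoid 𝒢] (a : 𝒢)
    (G : Type*) [Group G] (hconn : ∀ b c : 𝒢, Nonempty (b ⟶ c)) :
    Nonempty ((𝒢 ⥤ SingleObj G) ≃ (((a ⟶ a) →* G) × ({b : 𝒢 // b ≠ a} → G))) := by
  classical
  let p : ∀ b, a ⟶ b := Function.update (fun b => (hconn a b).some) a (𝟙 a)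
  have hp : p a = 𝟙 a := Function.update_self ..
  exact ⟨(functorToSingleObjEquiv p hp).trans
    ((Equiv.refl _).prodCongr (Equiv.subtypeFunEqAt a 1))⟩
end

section
/- Let X be a path-connected topological space, A a subset of X, x₀ ∈ A, and G a group. Then there is a bijection between the set of functors from Π(X,A) (the full subgroupoid of the fundamental groupoid of X on the objects A) to the one-object groupoid SingleObj G, and the product (Hom_{Grp}(π₁(X,x₀), G)) × (G^{A∖{x₀}}), i.e., the set of pairs consisting of a group homomorphism from the fundamental group π₁(X,x₀) to G together with an arbitrary function from A∖{x₀} to G. -/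
/-!
Choose for every object `a` of `Π(X,A)` a path class `q a : x₀ ⟶ a`, with `q x₀ = 𝟙`; this is
possible because `X` is path connected. Every morphism `f : a ⟶ b` then factors as
`(q a)⁻¹ ≫ (q a ≫ f ≫ (q b)⁻¹) ≫ q b` with the middle factor a loop at `x₀`, so a functor `F` to
`SingleObj G` is determined by its restriction to `π₁(X,x₀)` and by the values `F (q a)` for
`a ≠ x₀`. Conversely, any homomorphism `φ` and any values `g a` define such a functor by
`f ↦ g b * φ (q a ≫ f ≫ (q b)⁻¹) * (g a)⁻¹`.
-/

open CategoryTheory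

namespace CategoryTheory

instance ObjectProperty.FullSubcategory.groupoid {C : Type*} [Groupoid C]
    (P : ObjectProperty C) : Groupoid P.FullSubcategory :=
  InducedCategory.groupoid C ObjectProperty.FullSubcategory.obj

section

variable {C : Type*} [Category* C] {G : Type*} [Group G]

theorem exists_homs_from_eq_id_self {c₀ : C} (h : ∀ a, Nonempty (c₀ ⟶ a)) :
    ∃ q : ∀ a, c₀ ⟶ a, q c₀ = 𝟙 c₀ := by
  classical
  exact ⟨fun a => if ha : a = c₀ then eqToHom ha.symm else (h a).some, by simp⟩

@[simps]
def Functor.mapEndSingleObj (F : C ⥤ SingleObj G) (c : C) : End c →* G where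
  toFun γ := F.map γ
  map_one' := F.map_id c
  map_mul' γ δ := F.map_comp δ γ

end

namespace Groupoid

variable {C : Type*} [Groupoid C] {c₀ : C} (q : ∀ a, c₀ ⟶ a) {G : Type*} [Group G]

def conjEnd {a b : C} (f : a ⟶ b) : End c₀ :=
  q a ≫ f ≫ inv (q b)

@[simp]
theorem conjEnd_id (a : C) : conjEnd q (𝟙 a) = 1 := by
  simp [conjEnd]

theorem conjEnd_comp {a b c : C} (f : a ⟶ b) (f' : b ⟶ c) :
    conjEnd q (f ≫ f') = conjEnd q f' * conjEnd q f := by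
  simp [conjEnd]

theorem conjEnd_eq_self (hq : q c₀ = 𝟙 c₀) (γ : End c₀) : conjEnd q γ = γ := by
  simp [conjEnd, hq]

theorem conjEnd_self_eq_one (hq : q c₀ = 𝟙 c₀) (a : C) : conjEnd q (q a) = 1 := by
  simp [conjEnd, hq]

theorem map_eq_conjEnd (F : C ⥤ SingleObj G) {a b : C} (f : a ⟶ b) :
    F.map f = F.map (q b) * F.mapEndSingleObj c₀ (conjEnd q f) * (F.map (q a))⁻¹ := by
  simp only [Functor.mapEndSingleObj_apply, conjEnd, inv_eq_inv, Functor.map_comp,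
    Functor.map_inv, SingleObj.comp_as_mul, SingleObj.inv_as_inv]
  group

@[simps]
def singleObjFunctor (φ : End c₀ →* G) (g : C → G) : C ⥤ SingleObj G where
  obj _ := SingleObj.star G
  map {a b} f := g b * φ (conjEnd q f) * (g a)⁻¹
  map_id a := by
    rw [conjEnd_id, map_one, mul_one, mul_inv_cancel, SingleObj.id_as_one]
  map_comp {a b c} f f' := by
    rw [conjEnd_comp, map_mul, SingleObj.comp_as_mul]
    group

theorem singleObjFunctor_mapEndSingleObj (F : C ⥤ SingleObj G) :
    singleObjFunctor q (F.mapEndSingleObj c₀) (fun a => F.map (q a)) = F :=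
  Functor.ext (fun _ => rfl) fun _ _ f => by
    simp only [eqToHom_refl, Category.comp_id, Category.id_comp]
    exact (map_eq_conjEnd q F f).symm

variable {q}

theorem mapEndSingleObj_singleObjFunctor (hq : q c₀ = 𝟙 c₀) (φ : End c₀ →* G) {g : C → G}
    (hg : g c₀ = 1) : (singleObjFunctor q φ g).mapEndSingleObj c₀ = φ :=
  MonoidHom.ext fun γ => by simp [conjEnd_eq_self q hq, hg]

theorem singleObjFunctor_map_self (hq : q c₀ = 𝟙 c₀) (φ : End c₀ →* G) {g : C → G}
    (hg : g c₀ = 1) (a : C) : (singleObjFunctor q φ g).map (q a) = g a := by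
  rw [singleObjFunctor_map, conjEnd_self_eq_one q hq, map_one, hg, inv_one, mul_one, mul_one]

def functorSingleObjEquiv [DecidableEq C] (hq : q c₀ = 𝟙 c₀) :
    (C ⥤ SingleObj G) ≃ (End c₀ →* G) × ({a : C // a ≠ c₀} → G) where
  toFun F := (F.mapEndSingleObj c₀, fun a => F.map (q a))
  invFun p := singleObjFunctor q p.1 ((Equiv.funSplitAt c₀ G).symm (1, p.2))
  left_inv F := by
    have h₀ : F.map (q c₀) = 1 := by rw [hq, F.map_id, SingleObj.id_as_one]
    have hg : (Equiv.funSplitAt c₀ G).symm (1, fun a => F.map (q a)) = fun a => F.map (q a) :=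
      (Equiv.funSplitAt c₀ G).symm_apply_eq.2 (Prod.ext h₀.symm rfl)
    exact (congrArg _ hg).trans (singleObjFunctor_mapEndSingleObj q F)
  right_inv p := by
    have hg : (Equiv.funSplitAt c₀ G).symm (1, p.2) c₀ = 1 := by simp
    ext1
    · exact mapEndSingleObj_singleObjFunctor hq p.1 hg
    · funext a
      show (singleObjFunctor q _ _).map (q a) = _
      rw [singleObjFunctor_map_self hq p.1 hg]
      simp [a.2]

end Groupoid

end CategoryTheory

namespace FundamentalGroupoid

variable {X : Type*} [TopologicalSpace X]

theorem nonempty_hom [PathConnectedSpace X] (x y : FundamentalGroupoid X) : Nonempty (x ⟶ y) :=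
  ⟨fromPath (Path.Homotopic.Quotient.mk (PathConnectedSpace.somePath x.as y.as))⟩

def fullSubcategoryNeEquiv {A : Set X} {x₀ : X} (hx₀ : x₀ ∈ A) :
    {a : ObjectProperty.FullSubcategory (fun p : FundamentalGroupoid X => p.as ∈ A) //
      a ≠ ⟨⟨x₀⟩, hx₀⟩} ≃ {a : X // a ∈ A ∧ a ≠ x₀} where
  toFun a := ⟨a.1.obj.as, a.1.property, fun h => a.2 (by ext; exact h)⟩
  invFun a := ⟨⟨⟨a.1⟩, a.2.1⟩, fun h => a.2.2 (congrArg (·.obj.as) h)⟩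

end FundamentalGroupoid

/-- For a path-connected space `X`, a subset `A ⊆ X`, a basepoint `x₀ ∈ A` and a group `G`,
the functors from the fundamental groupoid `Π(X,A)` (the full subcategory of the fundamental
groupoid of `X` on the objects lying in `A`) to `SingleObj G` are in bijection with pairs of
a group homomorphism `π₁(X,x₀) → G` and an arbitrary function `A∖{x₀} → G`. -/
theorem functors_fundamentalGroupoid_equiv (X : Type*) [TopologicalSpace X]
    [PathConnectedSpace X] (A : Set X) (x₀ : X) (hx₀ : x₀ ∈ A) (G : Type*) [Group G] :
    Nonempty
      ((ObjectProperty.FullSubcategory (fun p : FundamentalGroupoid X => p.as ∈ A) ⥤ SingleObj G) ≃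
        ((FundamentalGroup X x₀ →* G) × ({a : X // a ∈ A ∧ a ≠ x₀} → G))) := by
  classical
  let P : ObjectProperty (FundamentalGroupoid X) := fun p => p.as ∈ A
  let c₀ : P.FullSubcategory := ⟨⟨x₀⟩, hx₀⟩
  obtain ⟨q, hq⟩ := exists_homs_from_eq_id_self fun a : P.FullSubcategory =>
    (FundamentalGroupoid.nonempty_hom c₀.obj a.obj).map ObjectProperty.homMk
  exact ⟨(Groupoid.functorSingleObjEquiv hq).trans <| .prodCongr
    (MulEquiv.monoidHomCongrLeftEquiv (P.fullyFaithfulι.mulEquivEnd c₀))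
    ((FundamentalGroupoid.fullSubcategoryNeEquiv hx₀).arrowCongr (.refl G))⟩
end

section
/- Let F be a finite field with q elements and g ≥ 1. Then the number of tuples (a₁,b₁,…,a_{2g},b_{2g}) ∈ ((F∖{0}) × F)^{2g} satisfying ∑_{i=1}^{2g} (a_i − 1)·b_i = 0 equals q^{2g−1}·((q−1)^{2g} + q − 1). -/
/-!
Group the tuples by `a`. For fixed `a` the condition on `b` is the vanishing of the linear form
with coefficients `aᵢ - 1`, which is nonzero unless `a = 1`; so the fibre over `a = 1` is all of
`F^{2g}` and every other fibre, over the `(q - 1)^{2g} - 1` remaining `a`, is a hyperplane.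
-/

open Module Matrix

theorem Module.Dual.natCard_ker_of_ne_zero {K V : Type*} [Field K] [AddCommGroup V] [Module K V]
    [FiniteDimensional K V] {f : Dual K V} (hf : f ≠ 0) :
    Nat.card (LinearMap.ker f) = Nat.card K ^ (finrank K V - 1) := by
  rw [Module.natCard_eq_pow_finrank (K := K), ← Dual.finrank_ker_add_one_of_ne_zero hf,
    Nat.add_sub_cancel]

section

variable {K ι : Type*} [Field K] [Fintype ι]

theorem natCard_dotProduct_eq_zero_of_ne_zero {c : ι → K} (hc : c ≠ 0) :
    Nat.card {b : ι → K // c ⬝ᵥ b = 0} = Nat.card K ^ (Fintype.card ι - 1) := by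
  classical
  have hf : dotProductBilin K K c ≠ 0 := by
    obtain ⟨i, hi⟩ := Function.ne_iff.mp hc
    refine fun h => hi ?_
    simpa using LinearMap.congr_fun h (Pi.single i 1)
  rw [← Module.finrank_fintype_fun_eq_card K, ← Dual.natCard_ker_of_ne_zero hf]
  rfl

theorem natCard_nonzero_sub_one_dotProduct_eq_zero [Finite K] :
    Nat.card {p : ι → K × K // (∀ i, (p i).1 ≠ 0) ∧ ∑ i, ((p i).1 - 1) * (p i).2 = 0} =
      Nat.card K ^ Fintype.card ι +
        ((Nat.card K - 1) ^ Fintype.card ι - 1) * Nat.card K ^ (Fintype.card ι - 1) := by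
  classical
  have := Fintype.ofFinite K
  let e : {p : ι → K × K // (∀ i, (p i).1 ≠ 0) ∧ ∑ i, ((p i).1 - 1) * (p i).2 = 0} ≃
      Σ u : ι → Kˣ, {b : ι → K // (fun i => (u i : K) - 1) ⬝ᵥ b = 0} :=
    { toFun p := ⟨fun i => Units.mk0 _ (p.2.1 i), fun i => (p.1 i).2, p.2.2⟩
      invFun x := ⟨fun i => (x.1 i, x.2.1 i), fun i => (x.1 i).ne_zero, x.2.2⟩
      left_inv _ := rfl
      right_inv x := Sigma.subtype_ext (funext fun i => Units.mk0_val _ (x.1 i).ne_zero) rfl }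
  have hfiber (u : ι → Kˣ) (hu : u ≠ 1) :
      Nat.card {b : ι → K // (fun i => (u i : K) - 1) ⬝ᵥ b = 0} =
        Nat.card K ^ (Fintype.card ι - 1) := by
    refine natCard_dotProduct_eq_zero_of_ne_zero fun h => hu (funext fun i => Units.ext ?_)
    simpa [sub_eq_zero] using congr_fun h i
  rw [Nat.card_congr e, Nat.card_sigma, Fintype.sum_eq_add_sum_compl 1,
    Finset.sum_congr rfl fun u hu => hfiber u (by simpa using hu)]
  simp [Finset.card_compl, Fintype.card_units]

end

/-- For a finite field `F` with `q` elements and `g ≥ 1`, the number of tuples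
`(a₁,b₁,…,a_{2g},b_{2g}) ∈ ((F∖{0}) × F)^{2g}` with `∑ (a_i − 1)·b_i = 0` equals
`q^{2g−1}·((q−1)^{2g} + q − 1)`. -/
theorem card_Xvar_finite_field (F : Type*) [Field F] [Fintype F] (q : ℕ)
    (hq : Fintype.card F = q) (g : ℕ) (hg : 1 ≤ g) :
    Nat.card {p : Fin (2 * g) → F × F //
        (∀ i, (p i).1 ≠ 0) ∧ ∑ i, ((p i).1 - 1) * (p i).2 = 0} =
      q ^ (2 * g - 1) * ((q - 1) ^ (2 * g) + q - 1) := by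
  rw [natCard_nonzero_sub_one_dotProduct_eq_zero, Nat.card_eq_fintype_card, hq, Fintype.card_fin]
  have hq2 : 2 ≤ q := hq ▸ Fintype.one_lt_card
  obtain ⟨n, hn⟩ : ∃ n, 2 * g = n + 1 := ⟨2 * g - 1, by omega⟩
  have hpos : 1 ≤ (q - 1) ^ (n + 1) := Nat.one_le_pow _ _ (by omega)
  rw [hn, Nat.add_sub_cancel,
    show (q - 1) ^ (n + 1) + q - 1 = ((q - 1) ^ (n + 1) - 1) + q by omega]
  ring
end
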